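/- In the CLOB equilibrium with constant jump J and no private information (λ_pr = 0, hence g = 0 and Δ = 0), the markup equals J·λ_pb/(λ_pb + λ_i), which is strictly increasing in λ_pb and strictly decreasing in λ_i for λ_i, λ_pb > 0. In particular it is strictly positive whenever λ_pb > 0. -/
import Mathlib

/-- with no private information, the CLOB markup
J·λpb/(λpb+λi) is strictly increasing in λpb, strictly decreasing in λi,
and strictly positive when λpb > 0. -/
theorem clob_markup_no_private_info
    (J : ℝ) (hJ : 0 < J) :
    (∀ li lpb₁ lpb₂ : ℝ, 0 < li → 0 < lpb₁ → lpb₁ < lpb₂ →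
      J * lpb₁ / (lpb₁ + li) < J * lpb₂ / (lpb₂ + li)) ∧
    (∀ lpb li₁ li₂ : ℝ, 0 < lpb → 0 < li₁ → li₁ < li₂ →
      J * lpb / (lpb + li₂) < J * lpb / (lpb + li₁)) ∧
    (∀ li lpb : ℝ, 0 < li → 0 < lpb → 0 < J * lpb / (lpb + li)) := by
  refine ⟨?_, ?_, ?_⟩
  · intro li a b hli ha hab
    rw [div_lt_div_iff₀ (by linarith) (by linarith)]
    nlinarith [mul_pos (mul_pos hJ hli) (sub_pos.mpr hab)]
  · intro lpb a b hlpb ha hab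
    rw [div_lt_div_iff₀ (by linarith) (by linarith)]
    nlinarith [mul_pos (mul_pos hJ hlpb) (sub_pos.mpr hab)]
  · intro li lpb hli hlpb
    positivity
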